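/- Let A be a subring of a field K and let R = A+XK[X] be the subring of the polynomial ring K[X] consisting of polynomials whose constant coefficient lies in A. Then R is a half-factorial domain (HFD) if and only if A is a field. -/

import Mathlib

open Polynomial

/-- The composite `A + X B[X]`: the subring of the polynomial ring `B[X]` consisting of
polynomials whose constant coefficient lies in the subring `A`. -/
def composite {B : Type*} [CommRing B] (A : Subring B) : Subring (Polynomial B) where
  carrier := {f | f.coeff 0 ∈ A}
  mul_mem' := fun hf hg => by simpa [Polynomial.mul_coeff_zero] using A.mul_mem hf hg
  one_mem' := by simpa using A.one_mem
  add_mem' := fun hf hg => by simpa using A.add_mem hf hg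
  zero_mem' := by simpa using A.zero_mem
  neg_mem' := fun hf => by simpa using A.neg_mem hf

/-- An integral domain is atomic if every nonzero nonunit is a finite product of
irreducible elements. -/
def IsAtomicDomain (R : Type*) [CommRing R] : Prop :=
  ∀ a : R, a ≠ 0 → ¬IsUnit a →
    ∃ s : Multiset R, (∀ x ∈ s, Irreducible x) ∧ s.prod = a

/-- A half-factorial domain (HFD): atomic, and any two factorizations of the same nonzero
nonunit into irreducible elements have the same number of factors. -/
def IsHFD (R : Type*) [CommRing R] : Prop :=
  IsAtomicDomain R ∧
    ∀ a : R, a ≠ 0 → ¬IsUnit a → ∀ s t : Multiset R,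
      (∀ x ∈ s, Irreducible x) → (∀ x ∈ t, Irreducible x) →
      s.prod = a → t.prod = a → Multiset.card s = Multiset.card t

section Aux

variable {K : Type*} [Field K] {A : Subring K}

lemma mem_composite (f : K[X]) : f ∈ composite A ↔ f.coeff 0 ∈ A := Iff.rfl

lemma isUnit_composite_iff (hA : IsField A) (f : composite A) :
    IsUnit f ↔ IsUnit (f : K[X]) := by
  constructor
  · intro h; exact h.map (composite A).subtype
  · intro h
    rw [Polynomial.isUnit_iff] at h
    obtain ⟨c, hc, hcf⟩ := h
    have hc0 : c ≠ 0 := hc.ne_zero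
    have hcA : c ∈ A := by
      have hm := f.2
      rw [mem_composite] at hm
      rwa [← hcf, coeff_C_zero] at hm
    obtain ⟨b, hb⟩ := hA.mul_inv_cancel (a := ⟨c, hcA⟩) (fun h => hc0 (congrArg Subtype.val h))
    have hb' : c * (b : K) = 1 := by
      have := congrArg Subtype.val hb
      simpa using this
    refine IsUnit.of_mul_eq_one (a := f) ⟨C (b : K), by simpa [mem_composite] using b.2⟩ ?_
    apply Subtype.ext
    show (f : K[X]) * C (b : K) = 1
    rw [← hcf, ← C_mul, hb', C_1]

lemma natDegree_pos_of_nonunit (hA : IsField A) (f : composite A) (hf0 : f ≠ 0)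
    (hfu : ¬IsUnit f) : 0 < (f : K[X]).natDegree := by
  by_contra hcon
  have hd : (f : K[X]).natDegree = 0 := by omega
  obtain ⟨c, hc⟩ := Polynomial.natDegree_eq_zero.mp hd
  have hfv : (f : K[X]) ≠ 0 := fun h => hf0 (Subtype.ext h)
  have hc0 : c ≠ 0 := fun h => hfv (by rw [← hc, h, C_0])
  exact hfu ((isUnit_composite_iff hA f).mpr
    (by rw [← hc]; exact isUnit_C.mpr (isUnit_iff_ne_zero.mpr hc0)))

/-- helper: if `p` is irreducible in the composite ring and `p = g * h` in `K[X]` with both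
nonunits and `h.coeff 0 ≠ 0`, contradiction. -/
lemma no_factor (hA : IsField A) {p : composite A} (hp : Irreducible p) {g h : K[X]}
    (hgh : (p : K[X]) = g * h) (hh : h.coeff 0 ≠ 0)
    (hgu : ¬IsUnit g) (hhu : ¬IsUnit h) : False := by
  set c := h.coeff 0 with hc
  have hgmem : g * C c ∈ composite A := by
    rw [mem_composite, coeff_mul_C]
    have := p.2
    rw [mem_composite, hgh, mul_coeff_zero] at this
    exact this
  have hhmem : h * C c⁻¹ ∈ composite A := by
    rw [mem_composite, coeff_mul_C, ← hc, mul_inv_cancel₀ hh]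
    exact A.one_mem
  have heq : p = (⟨g * C c, hgmem⟩ : composite A) * ⟨h * C c⁻¹, hhmem⟩ := by
    apply Subtype.ext
    show (p : K[X]) = g * C c * (h * C c⁻¹)
    have h1 : C c * C c⁻¹ = (1 : K[X]) := by rw [← C_mul, mul_inv_cancel₀ hh, C_1]
    calc (p : K[X]) = g * h := hgh
    _ = g * h * (C c * C c⁻¹) := by rw [h1, mul_one]
    _ = g * C c * (h * C c⁻¹) := by ring
  have hCc : IsUnit (C c : K[X]) := isUnit_C.mpr (isUnit_iff_ne_zero.mpr hh)
  have hCc' : IsUnit (C c⁻¹ : K[X]) := isUnit_C.mpr (isUnit_iff_ne_zero.mpr (inv_ne_zero hh))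
  rcases hp.isUnit_or_isUnit heq with hu | hu
  · have := (isUnit_composite_iff hA _).mp hu
    exact hgu (IsUnit.mul_iff.mp this).1
  · have := (isUnit_composite_iff hA _).mp hu
    exact hhu (IsUnit.mul_iff.mp this).1

lemma irreducible_val (hA : IsField A) {p : composite A} (hp : Irreducible p) :
    Irreducible (p : K[X]) := by
  constructor
  · exact fun h => hp.not_isUnit ((isUnit_composite_iff hA p).mpr h)
  · intro g h hgh
    by_contra hcon
    push_neg at hcon
    obtain ⟨hgu, hhu⟩ := hcon
    by_cases hh0 : h.coeff 0 ≠ 0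
    · exact no_factor hA hp hgh hh0 hgu hhu
    · push_neg at hh0
      by_cases hg0 : g.coeff 0 ≠ 0
      · exact no_factor hA hp (by rw [hgh]; ring) hg0 hhu hgu
      · push_neg at hg0
        have hgm : g ∈ composite A := by rw [mem_composite, hg0]; exact A.zero_mem
        have hhm : h ∈ composite A := by rw [mem_composite, hh0]; exact A.zero_mem
        have heq : p = (⟨g, hgm⟩ : composite A) * ⟨h, hhm⟩ := Subtype.ext hgh
        rcases hp.isUnit_or_isUnit heq with hu | hu
        · exact hgu ((isUnit_composite_iff hA _).mp hu)
        · exact hhu ((isUnit_composite_iff hA _).mp hu)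

lemma atomic_aux (hA : IsField A) :
    ∀ n (f : composite A), (f : K[X]).natDegree ≤ n → f ≠ 0 → ¬IsUnit f →
      ∃ s : Multiset (composite A), (∀ x ∈ s, Irreducible x) ∧ s.prod = f := by
  intro n
  induction n with
  | zero =>
    intro f hdeg hf0 hfu
    have := natDegree_pos_of_nonunit hA f hf0 hfu
    omega
  | succ n ih =>
    intro f hdeg hf0 hfu
    by_cases hirr : Irreducible f
    · exact ⟨{f}, by simpa using hirr, by simp⟩
    · rw [irreducible_iff, not_and] at hirr
      have h2 := hirr hfu
      push_neg at h2
      obtain ⟨g, h, hgh, hgu, hhu⟩ := h2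
      have hg0 : g ≠ 0 := by
        intro h0; apply hf0; rw [hgh, h0, zero_mul]
      have hh0 : h ≠ 0 := by
        intro h0; apply hf0; rw [hgh, h0, mul_zero]
      have hdg := natDegree_pos_of_nonunit hA g hg0 hgu
      have hdh := natDegree_pos_of_nonunit hA h hh0 hhu
      have hgv : (g : K[X]) ≠ 0 := fun h0 => hg0 (Subtype.ext h0)
      have hhv : (h : K[X]) ≠ 0 := fun h0 => hh0 (Subtype.ext h0)
      have hsum : (f : K[X]).natDegree = (g : K[X]).natDegree + (h : K[X]).natDegree := by
        have : (f : K[X]) = (g : K[X]) * (h : K[X]) := by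
          rw [hgh]; push_cast; ring
        rw [this, Polynomial.natDegree_mul hgv hhv]
      obtain ⟨s1, hs1, hs1p⟩ := ih g (by omega) hg0 hgu
      obtain ⟨s2, hs2, hs2p⟩ := ih h (by omega) hh0 hhu
      refine ⟨s1 + s2, ?_, ?_⟩
      · intro x hx
        rcases Multiset.mem_add.mp hx with hx | hx
        exacts [hs1 x hx, hs2 x hx]
      · rw [Multiset.prod_add, hs1p, hs2p, hgh]

end Aux

/-- for `A` a subring of a field `K`, the ring `R = A + XK[X]` is an HFD
iff `A` is a field. -/
theorem stmt5 {K : Type*} [Field K] (A : Subring K) :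
    IsHFD (composite A) ↔ IsField A := by
  constructor
  · intro hfd
    refine ⟨⟨0, 1, zero_ne_one⟩, mul_comm, ?_⟩
    intro a ha
    by_contra hno
    push_neg at hno
    have haK : (a : K) ≠ 0 := fun h => ha (Subtype.ext h)
    -- X is a nonzero nonunit of the composite ring with no irreducible factorization
    have hXmem : (X : K[X]) ∈ composite A := by
      rw [mem_composite, coeff_X_zero]; exact A.zero_mem
    set ξ : composite A := ⟨X, hXmem⟩ with hξ
    have hξ0 : ξ ≠ 0 := fun h => X_ne_zero (congrArg Subtype.val h)
    have hξu : ¬IsUnit ξ := by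
      intro h
      exact not_isUnit_X (h.map (composite A).subtype)
    obtain ⟨s, hs, hprod⟩ := hfd.1 ξ hξ0 hξu
    have hmap : (s.map ((composite A).subtype)).prod = X := by
      rw [← map_multiset_prod ((composite A).subtype) s, hprod]; rfl
    have hdvd : (X : K[X]) ∣ (s.map ((composite A).subtype)).prod := by
      rw [hmap]
    obtain ⟨q, hqs, hXq⟩ := Polynomial.prime_X.exists_mem_multiset_dvd hdvd
    obtain ⟨p, hps, rfl⟩ := Multiset.mem_map.mp hqs
    have hpdvd : ((composite A).subtype p : K[X]) ∣ X := by
      have h1 : p ∣ s.prod := Multiset.dvd_prod hps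
      have := map_dvd (composite A).subtype h1
      rwa [hprod] at this
    have hassoc : Associated ((composite A).subtype p) (X : K[X]) :=
      associated_of_dvd_dvd hpdvd hXq
    obtain ⟨u, hu⟩ := hassoc
    obtain ⟨c, hcu, hcC⟩ := Polynomial.isUnit_iff.mp u.isUnit
    have hc0 : c ≠ 0 := hcu.ne_zero
    -- p.val * C c = X, so p.val = C c⁻¹ * X
    have hpval : (p : K[X]) = C c⁻¹ * X := by
      have hx : (p : K[X]) * C c = X := by
        rw [hcC]; exact hu
      calc (p : K[X]) = (p : K[X]) * C c * C c⁻¹ := by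
            rw [mul_assoc, ← C_mul, mul_inv_cancel₀ hc0, C_1, mul_one]
        _ = C c⁻¹ * X := by rw [hx]; ring
    -- now factor p = C a * (C (c⁻¹ / a) * X)
    have hirr : Irreducible p := hs p hps
    have hm1 : (C (a : K) : K[X]) ∈ composite A := by
      rw [mem_composite, coeff_C_zero]; exact a.2
    have hm2 : (C (c⁻¹ / (a : K)) * X : K[X]) ∈ composite A := by
      rw [mem_composite, coeff_C_mul, coeff_X_zero, mul_zero]; exact A.zero_mem
    have heq : p = (⟨C (a : K), hm1⟩ : composite A) * ⟨C (c⁻¹ / (a : K)) * X, hm2⟩ := by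
      apply Subtype.ext
      show (p : K[X]) = C (a : K) * (C (c⁻¹ / (a : K)) * X)
      rw [hpval, ← mul_assoc, ← C_mul, mul_div_cancel₀ _ haK]
    rcases hirr.isUnit_or_isUnit heq with hu2 | hu2
    · -- a would be invertible in A
      obtain ⟨v, hv⟩ := hu2.exists_right_inv
      have hv' : (C (a : K) : K[X]) * (v : K[X]) = 1 := by
        have := congrArg Subtype.val hv
        simpa using this
      have hcoeff : (a : K) * (v : K[X]).coeff 0 = 1 := by
        have := congrArg (fun q => Polynomial.coeff q 0) hv'
        simpa [mul_coeff_zero] using this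
      exact hno ⟨(v : K[X]).coeff 0, v.2⟩ (Subtype.ext (by simpa using hcoeff))
    · -- C (c⁻¹/a) * X is a unit: impossible, degree 1
      have huK : IsUnit (C (c⁻¹ / (a : K)) * X : K[X]) :=
        hu2.map (composite A).subtype
      have hne : c⁻¹ / (a : K) ≠ 0 := div_ne_zero (inv_ne_zero hc0) haK
      have := natDegree_eq_zero_of_isUnit huK
      rw [natDegree_C_mul hne, natDegree_X] at this
      exact one_ne_zero this
  · intro hA
    constructor
    · intro f hf0 hfu
      exact atomic_aux hA (f : K[X]).natDegree f le_rfl hf0 hfu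
    · intro f hf0 hfu s t hs ht hsp htp
      have hs' : ∀ x ∈ s.map ((composite A).subtype), Irreducible x := by
        intro x hx
        obtain ⟨p, hp, rfl⟩ := Multiset.mem_map.mp hx
        exact irreducible_val hA (hs p hp)
      have ht' : ∀ x ∈ t.map ((composite A).subtype), Irreducible x := by
        intro x hx
        obtain ⟨p, hp, rfl⟩ := Multiset.mem_map.mp hx
        exact irreducible_val hA (ht p hp)
      have hps : (s.map ((composite A).subtype)).prod = (f : K[X]) := by
        rw [← map_multiset_prod ((composite A).subtype) s, hsp]; rfl
      have hpt : (t.map ((composite A).subtype)).prod = (f : K[X]) := by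
        rw [← map_multiset_prod ((composite A).subtype) t, htp]; rfl
      have hrel := UniqueFactorizationMonoid.factors_unique hs' ht'
        (by rw [hps, hpt]; exact Associated.refl _)
      have := Multiset.card_eq_card_of_rel hrel
      simpa using this
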